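/- Let κ be a regular cardinal and suppose there exists λ < κ with κ^λ > κ. If C is a category in which every hom-set has cardinality at most κ and which has all limits of diagrams of size < κ, then C is a poset (any parallel pair of morphisms in C are equal). -/

import Mathlib

/-!
STATEMENT 3 (Freyd/posetal collapse): Let `κ` be a regular cardinal with `λ < κ`
such that `κ ^ λ > κ`. If `C` is a category all of whose hom-sets have cardinality
at most `κ` and which has limits of all diagrams of size `< κ`, then `C` is a poset:
any parallel pair of morphisms is equal.
-/

open CategoryTheory Limits

universe v u

section AuxCardinal

open Cardinal Ordinal

/-- If `κ` is regular, `l < κ` and `κ < κ ^ l`, then some `μ < κ` has `κ < 2 ^ μ`. -/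
lemma freyd_exists_two_power_gt (κ l : Cardinal.{v}) (hκ : κ.IsRegular) (hl : l < κ)
    (hpow : κ < κ ^ l) : ∃ μ : Cardinal.{v}, μ < κ ∧ κ < 2 ^ μ := by
  by_contra hcon
  push_neg at hcon
  -- every cardinal μ < κ satisfies μ ^ l ≤ κ
  have key : ∀ μ : Cardinal.{v}, μ < κ → μ ^ l ≤ κ := by
    intro μ hμ
    calc μ ^ l ≤ (2 ^ μ) ^ l := power_le_power_right (cantor μ).le
    _ = 2 ^ (μ * l) := by rw [power_mul]
    _ ≤ κ := hcon _ (mul_lt_of_lt hκ.aleph0_le hμ hl)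
  let β : Type v := κ.ord.ToType
  let ι : Type v := l.out
  have hmkβ : #β = κ := by rw [mk_toType, card_ord]
  have hmkι : #ι = l := mk_out l
  -- every function ι → β is bounded
  have hbdd : ∀ f : ι → β, ∃ b : β, ∀ i, f i ≤ b := by
    intro f
    let e := Ordinal.ToType.mk (o := κ.ord)
    have hsup : (⨆ i, (e.symm (f i)).1) < κ.ord :=
      Cardinal.iSup_lt_ord_of_isRegular hκ (by rwa [hmkι]) fun i => (e.symm (f i)).2
    refine ⟨e ⟨_, hsup⟩, fun i => ?_⟩
    rw [← e.symm.le_iff_le, e.symm_apply_apply]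
    exact Subtype.mk_le_mk.2 (Ordinal.le_iSup _ i)
  -- cover functions by bounded sets
  have hcover : (Set.univ : Set (ι → β)) ⊆ ⋃ b : β, {f : ι → β | ∀ i, f i ≤ b} := by
    intro f _
    obtain ⟨b, hb⟩ := hbdd f
    exact Set.mem_iUnion.2 ⟨b, hb⟩
  have h1 : κ ^ l ≤ #(⋃ b : β, {f : ι → β | ∀ i, f i ≤ b}) := by
    calc κ ^ l = #(ι → β) := by rw [← hmkβ, ← hmkι, power_def]
    _ = #(Set.univ : Set (ι → β)) := mk_univ.symm
    _ ≤ _ := mk_le_mk_of_subset hcover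
  have h2 : ∀ b : β, #({f : ι → β | ∀ i, f i ≤ b}) ≤ κ := by
    intro b
    have hseg : #(Set.Iic b) < κ := by
      have hsub : Set.Iic b ⊆ insert b (Set.Iio b) := by
        intro x hx
        rcases eq_or_lt_of_le (Set.mem_Iic.mp hx) with h | h
        · exact Set.mem_insert_iff.2 (Or.inl h)
        · exact Set.mem_insert_iff.2 (Or.inr h)
      calc #(Set.Iic b) ≤ #(Set.Iio b) + 1 := le_trans (mk_le_mk_of_subset hsub) mk_insert_le
      _ < κ := add_lt_of_lt hκ.aleph0_le (mk_Iio_ord_toType b)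
        (one_lt_aleph0.trans_le hκ.aleph0_le)
    have hinj : #({f : ι → β | ∀ i, f i ≤ b}) ≤ #(ι → Set.Iic b) := by
      refine ⟨⟨fun f i => ⟨f.1 i, f.2 i⟩, fun f f' h => ?_⟩⟩
      ext i
      exact congrArg Subtype.val (congrFun h i)
    calc #({f : ι → β | ∀ i, f i ≤ b}) ≤ #(ι → Set.Iic b) := hinj
    _ = #(Set.Iic b) ^ l := by rw [← hmkι, power_def]
    _ ≤ κ := key _ hseg
  have h3 : #(⋃ b : β, {f : ι → β | ∀ i, f i ≤ b}) ≤ κ := by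
    calc #(⋃ b : β, {f : ι → β | ∀ i, f i ≤ b}) ≤ sum fun b : β => #({f : ι → β | ∀ i, f i ≤ b}) :=
        mk_iUnion_le_sum_mk
    _ ≤ sum fun _ : β => κ := sum_le_sum _ _ h2
    _ = κ * κ := by rw [sum_const', hmkβ]
    _ = κ := mul_eq_self hκ.aleph0_le
  exact absurd (h1.trans h3) (not_le.2 hpow)

end AuxCardinal

theorem stmt_3 (κ l : Cardinal.{v}) (hκ : κ.IsRegular) (hl : l < κ) (hpow : κ < κ ^ l)
    (C : Type u) [Category.{v} C]
    (homSmall : ∀ A B : C, Cardinal.mk (A ⟶ B) ≤ κ)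
    (hasLim : ∀ (J : Type v) [SmallCategory J],
      Cardinal.mk (Σ X Y : J, X ⟶ Y) < κ → HasLimitsOfShape J C)
    {A B : C} (f g : A ⟶ B) : f = g := by
  by_contra hfg
  obtain ⟨μ, hμκ, hκμ⟩ := freyd_exists_two_power_gt κ l hκ hl hpow
  let ι : Type v := μ.out
  have hmkι : Cardinal.mk ι = μ := Cardinal.mk_out μ
  -- the discrete diagram on ι is small
  have hsize : Cardinal.mk (Σ X Y : Discrete ι, X ⟶ Y) < κ := by
    have : Cardinal.mk (Σ X Y : Discrete ι, X ⟶ Y) ≤ μ * μ := by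
      calc Cardinal.mk (Σ X Y : Discrete ι, X ⟶ Y)
          = Cardinal.sum fun X : Discrete ι => Cardinal.mk (Σ Y : Discrete ι, X ⟶ Y) :=
            Cardinal.mk_sigma _
        _ ≤ Cardinal.sum fun _ : Discrete ι => μ := by
            refine Cardinal.sum_le_sum _ _ fun X => ?_
            calc Cardinal.mk (Σ Y : Discrete ι, X ⟶ Y)
                = Cardinal.sum fun Y : Discrete ι => Cardinal.mk (X ⟶ Y) := Cardinal.mk_sigma _
              _ ≤ Cardinal.sum fun _ : Discrete ι => 1 := by
                  refine Cardinal.sum_le_sum _ _ fun Y => ?_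
                  exact Cardinal.le_one_iff_subsingleton.2 inferInstance
              _ = Cardinal.mk (Discrete ι) * 1 := Cardinal.sum_const' _ _
              _ = μ := by rw [mul_one, Cardinal.mk_congr (discreteEquiv), hmkι]
        _ = Cardinal.mk (Discrete ι) * μ := Cardinal.sum_const' _ _
        _ = μ * μ := by rw [Cardinal.mk_congr (discreteEquiv), hmkι]
    exact this.trans_lt (Cardinal.mul_lt_of_lt hκ.aleph0_le hμκ hμκ)
  haveI : HasLimitsOfShape (Discrete ι) C := hasLim (Discrete ι) hsize
  -- build 2^μ distinct morphisms into the product of ι copies of B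
  let P : C := ∏ᶜ fun _ : ι => B
  let φ : (ι → ULift.{v} Bool) → (A ⟶ P) := fun s => Pi.lift fun i => if (s i).down then f else g
  have hinj : Function.Injective φ := by
    intro s t hst
    funext i
    have h := congrArg (· ≫ Pi.π (fun _ : ι => B) i) hst
    simp only [φ, Pi.lift_π] at h
    apply ULift.down_injective
    cases hs : (s i).down <;> cases ht : (t i).down <;>
      rw [hs, ht] at h <;>
      simp only [Bool.false_eq_true, if_false, if_true] at h <;>
      first
        | rfl
        | exact absurd h hfg
        | exact absurd h.symm hfg
  have : (2 : Cardinal.{v}) ^ μ ≤ κ := by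
    calc (2 : Cardinal.{v}) ^ μ = Cardinal.mk (ι → ULift.{v} Bool) := by
          have h2 : Cardinal.mk (ULift.{v} Bool) = 2 := by simp [Cardinal.mk_fintype]
          rw [← h2, ← hmkι, Cardinal.power_def]
      _ ≤ Cardinal.mk (A ⟶ P) := Cardinal.mk_le_of_injective hinj
      _ ≤ κ := homSmall A P
  exact absurd this (not_le.2 hκμ)
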